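/- arXiv:2005.05624 — 3 statements merged into one kernel-verified Lean document; each statement's English description precedes it below -/
import Mathlib

section
/- Let $\lambda = \rho e^{i\eta}$ with $\rho > 1$ and $\eta \in (\pi/2, \pi)$, let $\Delta$ denote the Laplacian, and let $R(\lambda,\Delta) = (\lambda\,\mathrm{Id} - \Delta)^{-1}$ be the resolvent. Then for every $\epsilon \in (0,1/2)$ there exists a constant $C = C_\eta$ (independent of $\rho$) such that for all $h \in H^m(\mathbb{R}^d)$, $\|\nabla R(\rho e^{i\eta}, \Delta) h\|_{m-2\epsilon}^2 \le C_\eta \, \rho^{-(1+2\epsilon)} \|h\|_m^2$. -/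
/-!
On the Fourier side the claim is a pointwise bound on the symbol: with `x = |ξ|²`,
`x / |ρe^{iη} + x|² ≤ C_η ρ^{-(1+2ε)} (1 + x)^{2ε}`. Since `cos η > -1`,
`|ρe^{iη} + x|² ≥ (1 + cos η)/2 · (ρ + x)²`, and `x / (ρ + x)²` is controlled by
interpolating `x ≤ ρ + x` and `x ≤ 1 + x` with weights `1 - 2ε` and `2ε`.
-/

open MeasureTheory

lemma Real.le_rpow_mul_rpow_of_le_of_le {x a b θ : ℝ} (hx : 0 ≤ x) (hxa : x ≤ a)
    (hxb : x ≤ b) (hθ₀ : 0 ≤ θ) (hθ₁ : θ ≤ 1) : x ≤ a ^ (1 - θ) * b ^ θ := by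
  rcases hx.eq_or_lt with rfl | hx
  · exact mul_nonneg (Real.rpow_nonneg hxa _) (Real.rpow_nonneg hxb _)
  calc x = x ^ (1 - θ) * x ^ θ := by rw [← Real.rpow_add hx, sub_add_cancel, Real.rpow_one]
    _ ≤ a ^ (1 - θ) * b ^ θ :=
      mul_le_mul (Real.rpow_le_rpow hx.le hxa (by linarith)) (Real.rpow_le_rpow hx.le hxb hθ₀)
        (by positivity) (Real.rpow_nonneg (hx.le.trans hxa) _)

lemma div_add_sq_le_rpow_div_rpow {ρ x ε : ℝ} (hρ : 0 < ρ) (hx : 0 ≤ x) (hε₀ : 0 ≤ ε)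
    (hε₁ : ε ≤ 1 / 2) : x / (ρ + x) ^ 2 ≤ (1 + x) ^ (2 * ε) / ρ ^ (1 + 2 * ε) := by
  have hρx : 0 < ρ + x := by linarith
  have hinterp : x ≤ (ρ + x) ^ (1 - 2 * ε) * (1 + x) ^ (2 * ε) :=
    Real.le_rpow_mul_rpow_of_le_of_le hx (by linarith) (by linarith) (by linarith) (by linarith)
  have hsplit : (ρ + x) ^ 2 = (ρ + x) ^ (1 - 2 * ε) * (ρ + x) ^ (1 + 2 * ε) := by
    rw [← Real.rpow_add hρx, ← Real.rpow_natCast]; norm_num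
  calc x / (ρ + x) ^ 2 ≤ (ρ + x) ^ (1 - 2 * ε) * (1 + x) ^ (2 * ε) / (ρ + x) ^ 2 := by gcongr
    _ = (1 + x) ^ (2 * ε) / (ρ + x) ^ (1 + 2 * ε) := by
      rw [hsplit, mul_div_mul_left _ _ (Real.rpow_pos_of_pos hρx _).ne']
    _ ≤ (1 + x) ^ (2 * ε) / ρ ^ (1 + 2 * ε) := by gcongr; linarith

lemma Complex.norm_sq_ofReal_mul_exp_add_ofReal (ρ η x : ℝ) :
    ‖(ρ : ℂ) * Complex.exp (η * Complex.I) + x‖ ^ 2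
      = (ρ * Real.cos η + x) ^ 2 + (ρ * Real.sin η) ^ 2 := by
  rw [Complex.sq_norm, Complex.normSq_apply]
  simp only [Complex.add_re, Complex.add_im, Complex.mul_re, Complex.mul_im,
    Complex.exp_ofReal_mul_I_re, Complex.exp_ofReal_mul_I_im, Complex.ofReal_re,
    Complex.ofReal_im]
  ring

lemma Complex.one_add_cos_mul_add_sq_le_norm_sq (ρ η x : ℝ) :
    (1 + Real.cos η) / 2 * (ρ + x) ^ 2
      ≤ ‖(ρ : ℂ) * Complex.exp (η * Complex.I) + x‖ ^ 2 := by
  rw [Complex.norm_sq_ofReal_mul_exp_add_ofReal]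
  have hgap : (ρ * Real.cos η + x) ^ 2 + (ρ * Real.sin η) ^ 2
      - (1 + Real.cos η) / 2 * (ρ + x) ^ 2 = (1 - Real.cos η) / 2 * (ρ - x) ^ 2 := by
    linear_combination ρ ^ 2 * Real.sin_sq_add_cos_sq η
  have : 0 ≤ (1 - Real.cos η) / 2 * (ρ - x) ^ 2 :=
    mul_nonneg (by linarith [Real.cos_le_one η]) (sq_nonneg _)
  linarith

lemma div_norm_sq_resolvent_symbol_le {ρ η x ε : ℝ} (hη : -1 < Real.cos η) (hρ : 0 < ρ)
    (hx : 0 ≤ x) (hε₀ : 0 ≤ ε) (hε₁ : ε ≤ 1 / 2) :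
    x / ‖(ρ : ℂ) * Complex.exp (η * Complex.I) + x‖ ^ 2
      ≤ 2 / (1 + Real.cos η) / ρ ^ (1 + 2 * ε) * (1 + x) ^ (2 * ε) := by
  have hcos : 0 < 1 + Real.cos η := by linarith
  calc x / ‖(ρ : ℂ) * Complex.exp (η * Complex.I) + x‖ ^ 2
      ≤ x / ((1 + Real.cos η) / 2 * (ρ + x) ^ 2) := by
        have : 0 < ρ + x := by linarith
        exact div_le_div_of_nonneg_left hx (by positivity)
          (Complex.one_add_cos_mul_add_sq_le_norm_sq ρ η x)
    _ = 2 / (1 + Real.cos η) * (x / (ρ + x) ^ 2) := by field_simp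
    _ ≤ 2 / (1 + Real.cos η) * ((1 + x) ^ (2 * ε) / ρ ^ (1 + 2 * ε)) :=
        mul_le_mul_of_nonneg_left (div_add_sq_le_rpow_div_rpow hρ hx hε₀ hε₁)
          (by positivity)
    _ = 2 / (1 + Real.cos η) / ρ ^ (1 + 2 * ε) * (1 + x) ^ (2 * ε) := by ring

lemma sobolev_weight_mul_resolvent_symbol_le {ρ η x ε m a : ℝ} (hη : -1 < Real.cos η)
    (hρ : 0 < ρ) (hx : 0 ≤ x) (hε₀ : 0 ≤ ε) (hε₁ : ε ≤ 1 / 2) (ha : 0 ≤ a) :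
    (1 + x) ^ (m - 2 * ε) * (x * a / ‖(ρ : ℂ) * Complex.exp (η * Complex.I) + x‖ ^ 2)
      ≤ 2 / (1 + Real.cos η) / ρ ^ (1 + 2 * ε) * ((1 + x) ^ m * a) := by
  have h1x : 0 < 1 + x := by linarith
  calc (1 + x) ^ (m - 2 * ε) * (x * a / ‖(ρ : ℂ) * Complex.exp (η * Complex.I) + x‖ ^ 2)
      = (1 + x) ^ (m - 2 * ε)
          * (x / ‖(ρ : ℂ) * Complex.exp (η * Complex.I) + x‖ ^ 2) * a := by
        ring
    _ ≤ (1 + x) ^ (m - 2 * ε)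
          * (2 / (1 + Real.cos η) / ρ ^ (1 + 2 * ε) * (1 + x) ^ (2 * ε)) * a := by
        gcongr; exact div_norm_sq_resolvent_symbol_le hη hρ hx hε₀ hε₁
    _ = 2 / (1 + Real.cos η) / ρ ^ (1 + 2 * ε) * ((1 + x) ^ (m - 2 * ε + 2 * ε) * a) := by
        rw [Real.rpow_add h1x]; ring
    _ = 2 / (1 + Real.cos η) / ρ ^ (1 + 2 * ε) * ((1 + x) ^ m * a) := by rw [sub_add_cancel]

lemma MeasureTheory.lintegral_ofReal_le_ofReal_mul_lintegral {α : Type*} [MeasurableSpace α]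
    {μ : Measure α} {f g : α → ℝ} {c : ℝ} (hc : 0 ≤ c) (hfg : ∀ x, f x ≤ c * g x) :
    ∫⁻ x, ENNReal.ofReal (f x) ∂μ
      ≤ ENNReal.ofReal c * ∫⁻ x, ENNReal.ofReal (g x) ∂μ := by
  rw [← lintegral_const_mul' _ _ ENNReal.ofReal_ne_top]
  refine lintegral_mono fun x => ?_
  rw [← ENNReal.ofReal_mul hc]
  exact ENNReal.ofReal_le_ofReal (hfg x)

/-- Fourier-side form, with `H = 𝓕h`: `R(ρe^{iη}, Δ)` is the multiplier `(ρe^{iη} + |ξ|²)⁻¹`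
and `∇` is multiplication by `iξ`. -/
theorem stmt2 (d : ℕ) (m η : ℝ) (hη : η ∈ Set.Ioo (Real.pi / 2) Real.pi) :
    ∀ ε : ℝ, ε ∈ Set.Ioo (0 : ℝ) (1 / 2) →
    ∃ C : ℝ, 0 < C ∧ ∀ ρ : ℝ, 1 < ρ →
      ∀ H : EuclideanSpace ℝ (Fin d) → ℂ,
        (∫⁻ ξ : EuclideanSpace ℝ (Fin d),
            ENNReal.ofReal ((1 + ‖ξ‖ ^ 2) ^ (m - 2 * ε) *
              (‖ξ‖ ^ 2 * ‖H ξ‖ ^ 2 /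
                ‖(ρ * Complex.exp (η * Complex.I) + (‖ξ‖ : ℂ) ^ 2 : ℂ)‖ ^ 2)))
          ≤ ENNReal.ofReal (C / ρ ^ (1 + 2 * ε)) *
            ∫⁻ ξ : EuclideanSpace ℝ (Fin d),
              ENNReal.ofReal ((1 + ‖ξ‖ ^ 2) ^ m * ‖H ξ‖ ^ 2) := by
  intro ε hε
  have hcos : -1 < Real.cos η := by
    simpa only [Real.cos_pi] using Real.cos_lt_cos_of_nonneg_of_le_pi
      (Real.pi_div_two_pos.trans hη.1).le le_rfl hη.2
  have hC : 0 < 2 / (1 + Real.cos η) := div_pos two_pos (by linarith)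
  refine ⟨2 / (1 + Real.cos η), hC, fun ρ hρ H => ?_⟩
  refine lintegral_ofReal_le_ofReal_mul_lintegral (by positivity) fun ξ => ?_
  rw [← Complex.ofReal_pow]
  exact sobolev_weight_mul_resolvent_symbol_le hcos (by linarith) (by positivity)
    hε.1.le hε.2.le (by positivity)
end

section
/- (Sewing lemma for semigroup functionals, uniqueness part.) Let $W$ be a Banach space with a strongly continuous contraction semigroup $(S_t)$, and define the operators $\delta, \phi$ and $\hat\delta = \delta - \phi$ on the spaces $D_k$ of linear maps from $W$ to $C(\Delta_k,\mathbb{R})$ as in the paper. If $Q \in D_2$ satisfies $\hat\delta Q = 0$ and $Q \in D_2^\gamma$ for some $\gamma > 1$ (i.e. $|[Qf]_{ts}| \le \|Q\|_{D_2^\gamma}\|f\|_W |t-s|^\gamma$ for all $f$), then $Q = 0$. -/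
/-! Splitting `[s, t]` at its midpoint with the cocycle identity writes `Q f t s` as a sum of two
terms on intervals of half the length, the second evaluated at `S (t - m) f`, whose norm is at most
`‖f‖` since `S` is a contraction. Iterating `n` times bounds `|Q f t s|` by
`K ‖f‖ (t - s) ^ γ (2 ^ (1 - γ)) ^ n`, and `2 ^ (1 - γ) < 1` because `γ > 1`. -/

lemma eq_zero_of_abs_le_mul_pow {x C r : ℝ} (hr0 : 0 ≤ r) (hr1 : r < 1)
    (h : ∀ n : ℕ, |x| ≤ C * r ^ n) : x = 0 := by
  have hlim : Filter.Tendsto (fun n : ℕ => C * r ^ n) Filter.atTop (nhds 0) := by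
    simpa using (tendsto_pow_atTop_nhds_zero_of_lt_one hr0 hr1).const_mul C
  exact abs_nonpos_iff.mp (ge_of_tendsto' hlim h)

lemma two_mul_half_rpow {x : ℝ} (hx : 0 ≤ x) (γ : ℝ) :
    2 * (x / 2) ^ γ = x ^ γ * 2 ^ (1 - γ) := by
  rw [Real.div_rpow hx zero_le_two, Real.rpow_sub zero_lt_two, Real.rpow_one]
  ring

section Sewing

variable {W : Type*} [NormedAddCommGroup W] [Module ℝ W] {T : ℝ} {S : ℝ → W →L[ℝ] W}
  {Q : W → ℝ → ℝ → ℝ}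

lemma cocycle_split (hQlin : ∀ t s : ℝ, IsLinearMap ℝ fun f => Q f t s)
    (hQcocycle : ∀ (f : W) (s u t : ℝ), 0 ≤ s → s ≤ u → u ≤ t → t ≤ T →
      Q f t s - Q f t u - Q f u s - Q (S (t - u) f - f) u s = 0)
    {f : W} {s u t : ℝ} (hs : 0 ≤ s) (hsu : s ≤ u) (hut : u ≤ t) (htT : t ≤ T) :
    Q f t s = Q f t u + Q (S (t - u) f) u s := by
  have h := hQcocycle f s u t hs hsu hut htT
  rw [(hQlin u s).map_sub] at h
  linarith

lemma abs_le_mul_rpow_mul_pow (hScontr : ∀ t : ℝ, 0 ≤ t → ∀ f : W, ‖S t f‖ ≤ ‖f‖)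
    (hQlin : ∀ t s : ℝ, IsLinearMap ℝ fun f => Q f t s)
    {γ K : ℝ} (hK : 0 ≤ K)
    (hQγ : ∀ (f : W) (s t : ℝ), 0 ≤ s → s ≤ t → t ≤ T →
      |Q f t s| ≤ K * ‖f‖ * (t - s) ^ γ)
    (hQcocycle : ∀ (f : W) (s u t : ℝ), 0 ≤ s → s ≤ u → u ≤ t → t ≤ T →
      Q f t s - Q f t u - Q f u s - Q (S (t - u) f - f) u s = 0) (n : ℕ) :
    ∀ (f : W) (s t : ℝ), 0 ≤ s → s ≤ t → t ≤ T →
      |Q f t s| ≤ K * ‖f‖ * (t - s) ^ γ * (2 ^ (1 - γ)) ^ n := by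
  induction n with
  | zero => simpa using hQγ
  | succ n ih =>
    intro f s t hs hst htT
    set m := (s + t) / 2
    have htm : t - m = (t - s) / 2 := by ring
    have hms : m - s = (t - s) / 2 := by ring
    have hbound : 0 ≤ ((t - s) / 2) ^ γ * (2 ^ (1 - γ)) ^ n := by
      have : 0 ≤ (t - s) / 2 := by linarith
      positivity
    have hright := ih f m t (by linarith) (by linarith) htT
    have hleft := ih (S (t - m) f) s m hs (by linarith) (by linarith)
    have hcontr : K * ‖S (t - m) f‖ ≤ K * ‖f‖ :=
      mul_le_mul_of_nonneg_left (hScontr _ (by linarith) f) hK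
    rw [htm] at hright
    rw [hms] at hleft
    calc |Q f t s| = |Q f t m + Q (S (t - m) f) m s| := by
          rw [cocycle_split hQlin hQcocycle (u := m) hs (by linarith) (by linarith) htT]
      _ ≤ |Q f t m| + |Q (S (t - m) f) m s| := abs_add_le _ _
      _ ≤ K * ‖f‖ * ((t - s) / 2) ^ γ * (2 ^ (1 - γ)) ^ n
          + K * ‖f‖ * ((t - s) / 2) ^ γ * (2 ^ (1 - γ)) ^ n := by
        refine add_le_add hright (hleft.trans ?_)
        simpa only [mul_assoc] using mul_le_mul_of_nonneg_right hcontr hbound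
      _ = K * ‖f‖ * (2 * ((t - s) / 2) ^ γ) * (2 ^ (1 - γ)) ^ n := by ring
      _ = K * ‖f‖ * (t - s) ^ γ * (2 ^ (1 - γ)) ^ (n + 1) := by
        rw [two_mul_half_rpow (by linarith)]
        ring

end Sewing

theorem stmt7_general {W : Type*} [NormedAddCommGroup W] [NormedSpace ℝ W]
    (T : ℝ)
    (S : ℝ → W →L[ℝ] W)
    (hScontr : ∀ t : ℝ, 0 ≤ t → ∀ f : W, ‖S t f‖ ≤ ‖f‖)
    (Q : W → ℝ → ℝ → ℝ)
    (hQlin : ∀ t s : ℝ, IsLinearMap ℝ fun f => Q f t s)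
    (γ K : ℝ) (hγ : 1 < γ) (hK : 0 ≤ K)
    (hQγ : ∀ (f : W) (s t : ℝ), 0 ≤ s → s ≤ t → t ≤ T →
      |Q f t s| ≤ K * ‖f‖ * (t - s) ^ γ)
    (hQcocycle : ∀ (f : W) (s u t : ℝ), 0 ≤ s → s ≤ u → u ≤ t → t ≤ T →
      Q f t s - Q f t u - Q f u s - Q (S (t - u) f - f) u s = 0) :
    ∀ (f : W) (s t : ℝ), 0 ≤ s → s ≤ t → t ≤ T → Q f t s = 0 := by
  intro f s t hs hst htT
  have hr0 : (0 : ℝ) ≤ 2 ^ (1 - γ) := Real.rpow_nonneg zero_le_two _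
  have hr1 : (2 : ℝ) ^ (1 - γ) < 1 := Real.rpow_lt_one_of_one_lt_of_neg one_lt_two (by linarith)
  exact eq_zero_of_abs_le_mul_pow hr0 hr1 fun n =>
    abs_le_mul_rpow_mul_pow hScontr hQlin hK hQγ hQcocycle n f s t hs hst htT

/-- Uniqueness part of the sewing lemma for semigroup functionals: if `Q ∈ D₂`
satisfies `δ̂Q = 0` (with `δ̂ = δ - φ`, `[φQf]_{tus} = [Q(S_{t-u} - Id)f]_{us}`)
and `Q ∈ D₂^γ` for some `γ > 1`, then `Q = 0`. -/
theorem stmt7 {W : Type*} [NormedAddCommGroup W] [NormedSpace ℝ W]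
    (T : ℝ) (hT : 0 < T)
    (S : ℝ → W →L[ℝ] W)
    (hS0 : S 0 = ContinuousLinearMap.id ℝ W)
    (hSadd : ∀ u v : ℝ, 0 ≤ u → 0 ≤ v → (S u).comp (S v) = S (u + v))
    (hScontr : ∀ t : ℝ, 0 ≤ t → ∀ f : W, ‖S t f‖ ≤ ‖f‖)
    (Q : W → ℝ → ℝ → ℝ)
    (hQlin : ∀ t s : ℝ, IsLinearMap ℝ fun f => Q f t s)
    (γ K : ℝ) (hγ : 1 < γ) (hK : 0 ≤ K)
    (hQγ : ∀ (f : W) (s t : ℝ), 0 ≤ s → s ≤ t → t ≤ T →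
      |Q f t s| ≤ K * ‖f‖ * (t - s) ^ γ)
    (hQcocycle : ∀ (f : W) (s u t : ℝ), 0 ≤ s → s ≤ u → u ≤ t → t ≤ T →
      Q f t s - Q f t u - Q f u s - Q (S (t - u) f - f) u s = 0) :
    ∀ (f : W) (s t : ℝ), 0 ≤ s → s ≤ t → t ≤ T → Q f t s = 0 :=
  stmt7_general T S hScontr Q hQlin γ K hγ hK hQγ hQcocycle
end

section
/- (Acyclicity of the perturbed cochain complex, degree 2.) Let $W$ be a Banach space with a semigroup $(S_t)$, and let $\hat\delta = \delta - \phi$ as in the paper. If $A \in D_3$ satisfies $\hat\delta A = 0$, then there exists $B \in D_2$ with $\hat\delta B = A$; one may take $[Bf]_{ts} = [Af]_{ts0}$ (up to sign convention $(-1)^{k+1}$). -/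
/-- Acyclicity of the perturbed cochain complex `(D_*, δ̂)` in degree 2:
if `A ∈ D₃` satisfies `δ̂A = 0` on the simplex, then `A = δ̂B` for the element
`B ∈ D₂` given by `[Bf]_{ts} = [Af]_{ts0}`. -/
theorem stmt8 {W : Type*} [AddCommGroup W] [Module ℝ W]
    (T : ℝ) (hT : 0 < T)
    (S : ℝ → W → W)
    (hSlin : ∀ t, IsLinearMap ℝ (S t))
    (hS0 : ∀ f, S 0 f = f)
    (hSadd : ∀ u v : ℝ, 0 ≤ u → 0 ≤ v → ∀ f, S u (S v f) = S (u + v) f)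
    (A : W → ℝ → ℝ → ℝ → ℝ)
    (hAlin : ∀ t u s : ℝ, IsLinearMap ℝ fun f => A f t u s)
    -- δ̂A = 0 on the simplex T ≥ t₁ ≥ t₂ ≥ t₃ ≥ t₄ ≥ 0:
    (hA : ∀ (f : W) (t₁ t₂ t₃ t₄ : ℝ),
      0 ≤ t₄ → t₄ ≤ t₃ → t₃ ≤ t₂ → t₂ ≤ t₁ → t₁ ≤ T →
      A f t₂ t₃ t₄ - A f t₁ t₃ t₄ + A f t₁ t₂ t₄ - A f t₁ t₂ t₃
        - A (S (t₁ - t₂) f - f) t₂ t₃ t₄ = 0) :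
    ∃ B : W → ℝ → ℝ → ℝ,
      (∀ t s : ℝ, IsLinearMap ℝ fun f => B f t s) ∧
      (∀ f t s, B f t s = A f t s 0) ∧
      -- δ̂B = A on the simplex T ≥ t ≥ u ≥ s ≥ 0:
      ∀ (f : W) (t u s : ℝ), 0 ≤ s → s ≤ u → u ≤ t → t ≤ T →
        B f u s - B f t s + B f t u - B (S (t - u) f - f) u s = A f t u s := by
  refine ⟨fun f t s => A f t s 0, fun t s => hAlin t s 0, fun _ _ _ => rfl, ?_⟩
  intro f t u s hs hsu hut htT
  have h := hA f t u s 0 le_rfl hs hsu hut htT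
  linarith
end
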